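/- arXiv:2604.26159 — 7 statements merged into one kernel-verified Lean document; each statement's English description precedes it below -/
import Mathlib

section
/- Let κ ∈ ℝ with κ ≠ 0, let A, B : ℝ² → Mat₂(ℂ) be differentiable matrix-valued functions of (z,t) satisfying the flatness condition ∂ₜA − ∂_zB + (1/κ)(AB − BA) = 0 pointwise, and let γ : ℝ² → Mat₂(ℂ) be twice continuously differentiable (so that its mixed second partial derivatives commute). Define α = κ∂_zγ − (Aγ − γA) and β = κ∂ₜγ − (Bγ − γB). Then the pair (α, β) satisfies the linearized flatness equation ∂ₜα − ∂_zβ + (1/κ)((αB − Bα) + (Aβ − βA)) = 0 pointwise. -/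
/-!
Differentiating `α` in `t` and `β` in `z`, the second derivatives of `γ` cancel because mixed
partials of a `C²` function commute. What remains is a purely algebraic expression which, by the
Jacobi identity, is the commutator `[γ, F]` of `γ` with the curvature
`F = ∂ₜA − ∂_zB + κ⁻¹[A,B]` of `(A,B)`; it vanishes because `F = 0`.
-/

open Matrix

section PartialDeriv

variable {E : Type*} [NormedAddCommGroup E] [NormedSpace ℝ E] {f : ℝ × ℝ → E} {z t : ℝ}

theorem DifferentiableAt.hasDerivAt_slice_fst (hf : DifferentiableAt ℝ f (z, t)) :
    HasDerivAt (fun w => f (w, t)) (fderiv ℝ f (z, t) (1, 0)) z :=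
  hf.hasFDerivAt.comp_hasDerivAt z ((hasDerivAt_id z).prodMk (hasDerivAt_const z t))

theorem DifferentiableAt.hasDerivAt_slice_snd (hf : DifferentiableAt ℝ f (z, t)) :
    HasDerivAt (fun s => f (z, s)) (fderiv ℝ f (z, t) (0, 1)) t :=
  hf.hasFDerivAt.comp_hasDerivAt t ((hasDerivAt_const t z).prodMk (hasDerivAt_id t))

theorem ContDiff.exists_hasDerivAt_mixed_partials (hf : ContDiff ℝ 2 f) (z t : ℝ) :
    ∃ c : E, HasDerivAt (fun s => deriv (fun w => f (w, s)) z) c t ∧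
      HasDerivAt (fun w => deriv (fun s => f (w, s)) t) c z := by
  have hf₁ : Differentiable ℝ f := hf.differentiable two_ne_zero
  have hf₂ : Differentiable ℝ (fderiv ℝ f) :=
    (hf.fderiv_right (m := 1) le_rfl).differentiable one_ne_zero
  have h_fst : (fun s => deriv (fun w => f (w, s)) z) = fun s => fderiv ℝ f (z, s) (1, 0) :=
    funext fun s => (hf₁ (z, s)).hasDerivAt_slice_fst.deriv
  have h_snd : (fun w => deriv (fun s => f (w, s)) t) = fun w => fderiv ℝ f (w, t) (0, 1) :=
    funext fun w => (hf₁ (w, t)).hasDerivAt_slice_snd.deriv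
  have h_symm : fderiv ℝ (fderiv ℝ f) (z, t) (1, 0) (0, 1) =
      fderiv ℝ (fderiv ℝ f) (z, t) (0, 1) (1, 0) :=
    (hf.contDiffAt.isSymmSndFDerivAt (by simp)).eq _ _
  refine ⟨fderiv ℝ (fderiv ℝ f) (z, t) (0, 1) (1, 0), ?_, ?_⟩
  · simpa [h_fst] using
      (hf₂ (z, t)).hasDerivAt_slice_snd.clm_apply (hasDerivAt_const t ((1 : ℝ), (0 : ℝ)))
  · simpa [h_snd, h_symm] using
      (hf₂ (z, t)).hasDerivAt_slice_fst.clm_apply (hasDerivAt_const z ((0 : ℝ), (1 : ℝ)))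

end PartialDeriv

section EntrywiseDeriv

variable {l m n R : Type*} [NormedRing R] [NormedAlgebra ℝ R]

/-- Matrices carry no global norm, so derivatives of matrix-valued functions are taken entrywise. -/
def Matrix.HasEntrywiseDerivAt (f : ℝ → Matrix m n R) (f' : Matrix m n R) (x : ℝ) : Prop :=
  ∀ i j, HasDerivAt (fun s => f s i j) (f' i j) x

namespace Matrix.HasEntrywiseDerivAt

variable {f g : ℝ → Matrix m n R} {f' g' : Matrix m n R} {x : ℝ}

theorem deriv_eq (hf : HasEntrywiseDerivAt f f' x) :
    (of fun i j => deriv (fun s => f s i j) x) = f' :=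
  ext fun i j => (hf i j).deriv

theorem sub (hf : HasEntrywiseDerivAt f f' x) (hg : HasEntrywiseDerivAt g g' x) :
    HasEntrywiseDerivAt (fun s => f s - g s) (f' - g') x :=
  fun i j => (hf i j).sub (hg i j)

theorem const_smul (c : ℝ) (hf : HasEntrywiseDerivAt f f' x) :
    HasEntrywiseDerivAt (fun s => c • f s) (c • f') x :=
  fun i j => (hf i j).const_smul c

theorem mul [Fintype n] {f : ℝ → Matrix l n R} {f' : Matrix l n R} {g : ℝ → Matrix n m R}
    {g' : Matrix n m R} (hf : HasEntrywiseDerivAt f f' x) (hg : HasEntrywiseDerivAt g g' x) :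
    HasEntrywiseDerivAt (fun s => f s * g s) (f' * g x + f x * g') x := by
  intro i j
  simpa only [mul_apply, add_apply, ← Finset.sum_add_distrib] using
    HasDerivAt.fun_sum fun k _ => (hf i k).fun_mul (hg k j)

end Matrix.HasEntrywiseDerivAt

variable {F : ℝ → ℝ → Matrix m n R} {z t : ℝ}

theorem Matrix.hasEntrywiseDerivAt_slice_fst
    (hF : ∀ i j, DifferentiableAt ℝ (fun p : ℝ × ℝ => F p.1 p.2 i j) (z, t)) :
    HasEntrywiseDerivAt (fun w => F w t) (of fun i j => deriv (fun w => F w t i j) z) z :=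
  fun i j => (hF i j).hasDerivAt_slice_fst.differentiableAt.hasDerivAt

theorem Matrix.hasEntrywiseDerivAt_slice_snd
    (hF : ∀ i j, DifferentiableAt ℝ (fun p : ℝ × ℝ => F p.1 p.2 i j) (z, t)) :
    HasEntrywiseDerivAt (fun s => F z s) (of fun i j => deriv (fun s => F z s i j) t) t :=
  fun i j => (hF i j).hasDerivAt_slice_snd.differentiableAt.hasDerivAt

theorem Matrix.exists_hasEntrywiseDerivAt_mixed_partials
    (hF : ∀ i j, ContDiff ℝ 2 (fun p : ℝ × ℝ => F p.1 p.2 i j)) (z t : ℝ) :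
    ∃ F_zt : Matrix m n R,
      HasEntrywiseDerivAt (fun s => of fun i j => deriv (fun w => F w s i j) z) F_zt t ∧
      HasEntrywiseDerivAt (fun w => of fun i j => deriv (fun s => F w s i j) t) F_zt z := by
  choose c hc using fun i j => (hF i j).exists_hasDerivAt_mixed_partials z t
  exact ⟨of c, fun i j => (hc i j).1, fun i j => (hc i j).2⟩

end EntrywiseDeriv

section GaugeAlgebra

variable {K R : Type*} [Field K] [Ring R] [Module K R] [IsScalarTower K R R] [SMulCommClass K R R]

theorem gauge_linearization_eq_commutator {κ : K} (hκ : κ ≠ 0)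
    (A B Γ Γ_z Γ_t Γ_zt A_t B_z : R) :
    (κ • Γ_zt - (A_t * Γ + A * Γ_t - (Γ_t * A + Γ * A_t)))
      - (κ • Γ_zt - (B_z * Γ + B * Γ_z - (Γ_z * B + Γ * B_z)))
      + κ⁻¹ • (((κ • Γ_z - (A * Γ - Γ * A)) * B - B * (κ • Γ_z - (A * Γ - Γ * A)))
        + (A * (κ • Γ_t - (B * Γ - Γ * B)) - (κ • Γ_t - (B * Γ - Γ * B)) * A))
      = Γ * (A_t - B_z + κ⁻¹ • (A * B - B * A))
        - (A_t - B_z + κ⁻¹ • (A * B - B * A)) * Γ := by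
  simp only [mul_sub, sub_mul, mul_add, add_mul, smul_mul_assoc, mul_smul_comm, smul_sub,
    smul_add, smul_smul, inv_mul_cancel₀ hκ, one_smul, mul_assoc]
  abel

end GaugeAlgebra

/-- Infinitesimal gauge transformations solve the linearized flatness equation:
if `(A,B)` is flat, `∂ₜA − ∂_zB + (1/κ)[A,B] = 0`, and `γ` is C², then
`α = κ∂_zγ − [A,γ]` and `β = κ∂ₜγ − [B,γ]` satisfy
`∂ₜα − ∂_zβ + (1/κ)([α,B] + [A,β]) = 0`. -/
theorem gauge_solves_linearized_flatness
    (κ : ℝ) (hκ : κ ≠ 0)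
    (A B γ : ℝ → ℝ → Matrix (Fin 2) (Fin 2) ℂ)
    (hA : ∀ i j : Fin 2, Differentiable ℝ (fun p : ℝ × ℝ => A p.1 p.2 i j))
    (hB : ∀ i j : Fin 2, Differentiable ℝ (fun p : ℝ × ℝ => B p.1 p.2 i j))
    (hγ : ∀ i j : Fin 2, ContDiff ℝ 2 (fun p : ℝ × ℝ => γ p.1 p.2 i j))
    (hflat : ∀ z t : ℝ,
      (Matrix.of fun i j => deriv (fun s => A z s i j) t)
        - (Matrix.of fun i j => deriv (fun w => B w t i j) z)
        + κ⁻¹ • (A z t * B z t - B z t * A z t) = 0) :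
    let α : ℝ → ℝ → Matrix (Fin 2) (Fin 2) ℂ := fun z t =>
      κ • (Matrix.of fun i j => deriv (fun w => γ w t i j) z)
        - (A z t * γ z t - γ z t * A z t)
    let β : ℝ → ℝ → Matrix (Fin 2) (Fin 2) ℂ := fun z t =>
      κ • (Matrix.of fun i j => deriv (fun s => γ z s i j) t)
        - (B z t * γ z t - γ z t * B z t)
    ∀ z t : ℝ,
      (Matrix.of fun i j => deriv (fun s => α z s i j) t)
        - (Matrix.of fun i j => deriv (fun w => β w t i j) z)
        + κ⁻¹ • ((α z t * B z t - B z t * α z t) + (A z t * β z t - β z t * A z t)) = 0 := by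
  intro α β z t
  have hγ₁ i j := (hγ i j).differentiable two_ne_zero (z, t)
  have hA_t := hasEntrywiseDerivAt_slice_snd fun i j => hA i j (z, t)
  have hB_z := hasEntrywiseDerivAt_slice_fst fun i j => hB i j (z, t)
  have hγ_t := hasEntrywiseDerivAt_slice_snd hγ₁
  have hγ_z := hasEntrywiseDerivAt_slice_fst hγ₁
  obtain ⟨γ_zt, hγ_zt, hγ_tz⟩ := exists_hasEntrywiseDerivAt_mixed_partials hγ z t
  have hα_t : HasEntrywiseDerivAt (fun s => α z s) _ t :=
    (hγ_zt.const_smul κ).sub ((hA_t.mul hγ_t).sub (hγ_t.mul hA_t))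
  have hβ_z : HasEntrywiseDerivAt (fun w => β w t) _ z :=
    (hγ_tz.const_smul κ).sub ((hB_z.mul hγ_z).sub (hγ_z.mul hB_z))
  rw [hα_t.deriv_eq, hβ_z.deriv_eq, gauge_linearization_eq_commutator hκ, hflat z t,
    mul_zero, zero_mul, sub_zero]
end

section
/- Let R be an associative unital ℚ-algebra, let κ, t, θ be central elements of R, and let p, q ∈ R satisfy pq − qp = κ. Define H_PII = (1/2)p² + (1/2)(pq² + q²p) + (t/2)p + θq. Then H_PII·q − q·H_PII = κ·(p + q² + t/2) and H_PII·p − p·H_PII = −κ·(pq + qp + θ). Consequently the Heisenberg equations q̇ = (1/κ)[H_PII, q], ṗ = (1/κ)[H_PII, p] reproduce the quantum Painlevé II flow q̇ = p + q² + t/2, ṗ = −pq − qp − θ. -/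
private lemma comm_mul_left {R : Type*} [Ring R] (a b c : R) :
    a * b * c - c * (a * b) = a * (b * c - c * b) + (a * c - c * a) * b := by
  noncomm_ring

private lemma comm_mul_right {R : Type*} [Ring R] (a b c : R) :
    a * (b * c) - b * c * a = (a * b - b * a) * c + b * (a * c - c * a) := by
  noncomm_ring

/-- Hamiltonian structure of quantum Painlevé II: for `p, q` with `pq − qp = κ`
(`κ, t, θ` central) and
`H_PII = (1/2)p² + (1/2)(pq² + q²p) + (t/2)p + θq`, one has
`[H_PII, q] = κ(p + q² + t/2)` and `[H_PII, p] = −κ(pq + qp + θ)`, so the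
Heisenberg equations reproduce the quantum Painlevé II flow. -/
theorem quantum_painleveII_hamiltonian
    (R : Type*) [Ring R] [Algebra ℚ R]
    (κ t θ p q : R)
    (hκ : ∀ x : R, Commute κ x) (ht : ∀ x : R, Commute t x) (hθ : ∀ x : R, Commute θ x)
    (hpq : p * q - q * p = κ) :
    let HPII : R := ((1 : ℚ)/2) • (p * p) + ((1 : ℚ)/2) • (p * (q * q) + (q * q) * p)
      + ((1 : ℚ)/2) • (t * p) + θ * q
    HPII * q - q * HPII = κ * (p + q * q + ((1 : ℚ)/2) • t) ∧
    HPII * p - p * HPII = -(κ * (p * q + q * p + θ)) := by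
  intro HPII
  have half : ∀ x : R, ((1:ℚ)/2) • x + ((1:ℚ)/2) • x = x := by
    intro x; rw [← add_smul]; norm_num
  have hqqp : p * (q * q) - (q * q) * p = κ * q + κ * q := by
    rw [comm_mul_right, hpq, ← (hκ q).eq]
  constructor
  · have expand : HPII * q - q * HPII =
        ((1:ℚ)/2) • (p*p*q - q*(p*p))
        + ((1:ℚ)/2) • ((p*(q*q)*q - q*(p*(q*q))) + ((q*q)*p*q - q*((q*q)*p)))
        + ((1:ℚ)/2) • (t*p*q - q*(t*p)) + (θ*q*q - q*(θ*q)) := by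
      simp only [HPII, add_mul, mul_add, smul_mul_assoc, mul_smul_comm, smul_sub, smul_add]
      abel
    have c1 : p*p*q - q*(p*p) = κ*p + κ*p := by
      rw [comm_mul_left, hpq, ← (hκ p).eq]
    have c2 : p*(q*q)*q - q*(p*(q*q)) = κ*(q*q) := by
      rw [comm_mul_left, hpq]; simp [mul_assoc]
    have c3 : (q*q)*p*q - q*((q*q)*p) = κ*(q*q) := by
      rw [comm_mul_left, hpq, ← (hκ (q*q)).eq]; simp [mul_assoc]
    have c4 : t*p*q - q*(t*p) = κ*t := by
      rw [comm_mul_left, hpq, ← (hκ t).eq]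
      simp [(ht q).eq]
    have c5 : θ*q*q - q*(θ*q) = 0 := by
      rw [comm_mul_left]
      simp [(hθ q).eq]
    rw [expand, c1, c2, c3, c4, c5, add_zero]
    simp only [smul_add, half, mul_add, mul_smul_comm]
  · have expand : HPII * p - p * HPII =
        ((1:ℚ)/2) • (p*p*p - p*(p*p))
        + ((1:ℚ)/2) • ((p*(q*q)*p - p*(p*(q*q))) + ((q*q)*p*p - p*((q*q)*p)))
        + ((1:ℚ)/2) • (t*p*p - p*(t*p)) + (θ*q*p - p*(θ*q)) := by
      simp only [HPII, add_mul, mul_add, smul_mul_assoc, mul_smul_comm, smul_sub, smul_add]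
      abel
    have hneg : (q*q)*p - p*(q*q) = -(κ*q + κ*q) := by
      rw [← hqqp]; abel
    have d1 : p*p*p - p*(p*p) = 0 := by simp [mul_assoc]
    have d2 : p*(q*q)*p - p*(p*(q*q)) = -(κ*(p*q) + κ*(p*q)) := by
      rw [comm_mul_left, hneg]
      simp only [sub_self, zero_mul, add_zero, mul_neg, mul_add]
      rw [← mul_assoc, ← (hκ p).eq, mul_assoc]
    have d3 : (q*q)*p*p - p*((q*q)*p) = -(κ*(q*p) + κ*(q*p)) := by
      rw [comm_mul_left, hneg]
      simp only [sub_self, mul_zero, zero_add, neg_mul, add_mul, mul_assoc]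
    have d4 : t*p*p - p*(t*p) = 0 := by
      rw [comm_mul_left]
      simp [(ht p).eq]
    have d5 : θ*q*p - p*(θ*q) = -(κ*θ) := by
      rw [comm_mul_left]
      have : q*p - p*q = -κ := by rw [← hpq]; abel
      rw [this]
      simp [(hθ p).eq, (hθ κ).eq.symm]
    rw [expand, d1, d2, d3, d4, d5]
    simp only [smul_zero, zero_add, add_zero, smul_neg, smul_add, half, mul_add]
    abel
end

section
/- Let K be a field of characteristic zero and let I ∈ K. If a polynomial P ∈ K[q] satisfies the identity (I − q²)·D((I − q²)·D(P)) = (4q² − 2I)·P, where D denotes the formal derivative with respect to q, then P = 0. -/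
open Polynomial


/-- Key rigidity step for completeness of class-preserving integrable directions of
Painlevé II: over a field of characteristic zero, the only polynomial `P ∈ K[q]`
satisfying `(I − q²)·D((I − q²)·D(P)) = (4q² − 2I)·P` is `P = 0`
(matching leading coefficients forces `n(n+1) = 4`, which has no solutions in ℕ). -/
theorem painleveII_variation_no_polynomial_solution
    (K : Type*) [Field K] [CharZero K] (I : K) (P : Polynomial K)
    (h : (Polynomial.C I - Polynomial.X ^ 2) *
        Polynomial.derivative ((Polynomial.C I - Polynomial.X ^ 2) * Polynomial.derivative P)
      = (4 * Polynomial.X ^ 2 - 2 * Polynomial.C I) * P) :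
    P = 0 := by
  by_contra hP
  have c2 : (C (2:K)) = 2 := map_ofNat C 2
  have c4 : (C (4:K)) = 4 := map_ofNat C 4
  have hd : derivative ((C I - X ^ 2) * derivative P)
      = (C I - X ^ 2) * derivative (derivative P) - 2 * (derivative P * X) := by
    rw [derivative_mul]
    simp
    ring
  rw [hd] at h
  have h' : C I * (C I * derivative (derivative P))
      - C 2 * (C I * (derivative (derivative P) * X ^ 2))
      + derivative (derivative P) * X ^ 4
      - C 2 * (C I * (derivative P * X ^ 1)) + C 2 * (derivative P * X ^ 3)
      = C 4 * (P * X ^ 2) - C 2 * (C I * P) := by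
    rw [c2, c4]
    linear_combination h
  have hvan : ∀ k, P.natDegree < k → P.coeff k = 0 := fun k hk =>
    coeff_eq_zero_of_natDegree_lt hk
  have ha : P.coeff P.natDegree ≠ 0 := by
    simpa [coeff_natDegree] using leadingCoeff_ne_zero.mpr hP
  have hc := fun k => congrArg (fun p => Polynomial.coeff p k) h'
  simp only [coeff_add, coeff_sub, coeff_C_mul, coeff_mul_X_pow', coeff_derivative] at hc
  rcases hn : P.natDegree with _ | _ | m
  · have hc2 := hc 2
    norm_num at hc2
    rw [hvan 4 (by omega), hvan 2 (by omega)] at hc2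
    rw [hn] at ha
    simp at hc2
    exact ha hc2
  · have hc3 := hc 3
    norm_num at hc3
    rw [hvan 5 (by omega), hvan 3 (by omega)] at hc3
    rw [hn] at ha
    simp at hc3
    exact ha (by simpa using hc3)
  · have hck := hc (m + 4)
    norm_num at hck
    simp only [show m+4-2 = m+2 from rfl, show m+4-4 = m from rfl, show m+4-1 = m+3 from rfl, show m+4-3 = m+1 from rfl, Nat.cast_add] at hck
    rw [hvan (m+6) (by omega), hvan (m+4) (by omega)] at hck
    simp only [show m+1+1 = m+2 from rfl] at hck
    have ha' : P.coeff (m+2) ≠ 0 := by rw [hn] at ha; exact ha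
    have key : (((m:K)+2) * ((m:K)+3) - 4) * P.coeff (m+2) = 0 := by
      linear_combination hck
    rcases mul_eq_zero.mp key with h0 | h0
    · have h4 : ((m:K)+2) * ((m:K)+3) = 4 := by linear_combination h0
      have : (m+2) * (m+3) = 4 := by exact_mod_cast h4
      nlinarith
    · exact ha' h0
end

section
/- Let D = {(u,θ) ∈ ℝ² : u > 0}, and let J : D → ℝ and H₀ : D → ℝ with H₀ differentiable on D. Suppose J(u,θ) ≠ 0 for all (u,θ) ∈ D, and that on all of D one has J·(∂H₀/∂θ) = u and J·(∂H₀/∂u) = 0. Then ∂H₀/∂u vanishes identically on D; there exists a differentiable function h : ℝ → ℝ such that H₀(u,θ) = h(θ) for all (u,θ) ∈ D, the derivative h′(θ) is nonzero for every θ, and J(u,θ) = u / h′(θ) on D. -/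
/-- Classification of the deformation sector (analytic core): on `D = {u > 0}`,
if `J ≠ 0`, `J·∂H₀/∂θ = u` and `J·∂H₀/∂u = 0` with `H₀` differentiable on `D`,
then `∂H₀/∂u ≡ 0`, `H₀(u,θ) = h(θ)` for a differentiable `h` with `h′(θ) ≠ 0`
everywhere, and `J(u,θ) = u / h′(θ)`. -/
theorem deformation_sector_classification
    (J H₀ : ℝ → ℝ → ℝ)
    (hH : DifferentiableOn ℝ (fun p : ℝ × ℝ => H₀ p.1 p.2) {p : ℝ × ℝ | 0 < p.1})
    (hJ : ∀ u θ : ℝ, 0 < u → J u θ ≠ 0)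
    (h1 : ∀ u θ : ℝ, 0 < u → J u θ * deriv (fun θ' => H₀ u θ') θ = u)
    (h2 : ∀ u θ : ℝ, 0 < u → J u θ * deriv (fun u' => H₀ u' θ) u = 0) :
    (∀ u θ : ℝ, 0 < u → deriv (fun u' => H₀ u' θ) u = 0) ∧
    ∃ h : ℝ → ℝ, Differentiable ℝ h ∧
      (∀ u θ : ℝ, 0 < u → H₀ u θ = h θ) ∧
      (∀ θ : ℝ, deriv h θ ≠ 0) ∧
      (∀ u θ : ℝ, 0 < u → J u θ = u / deriv h θ) := by
  have hopen : IsOpen {p : ℝ × ℝ | 0 < p.1} := isOpen_lt continuous_const continuous_fst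
  have hHat : ∀ u θ : ℝ, 0 < u →
      DifferentiableAt ℝ (fun p : ℝ × ℝ => H₀ p.1 p.2) (u, θ) := by
    intro u θ hu
    exact hH.differentiableAt (hopen.mem_nhds hu)
  have hdiffu : ∀ u θ : ℝ, 0 < u → DifferentiableAt ℝ (fun u' => H₀ u' θ) u := by
    intro u θ hu
    exact (hHat u θ hu).comp u (((differentiableAt_id : DifferentiableAt ℝ id u).prodMk (differentiableAt_const θ)))
  have hdiffθ : ∀ u θ : ℝ, 0 < u → DifferentiableAt ℝ (fun θ' => H₀ u θ') θ := by
    intro u θ hu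
    exact (hHat u θ hu).comp θ ((differentiableAt_const u).prodMk differentiableAt_id)
  -- first conclusion
  have hderu : ∀ u θ : ℝ, 0 < u → deriv (fun u' => H₀ u' θ) u = 0 := by
    intro u θ hu
    have := h2 u θ hu
    exact (mul_eq_zero.1 this).resolve_left (hJ u θ hu)
  refine ⟨hderu, ?_⟩
  -- H₀ is constant in u on Ioi 0
  have hconst : ∀ u θ : ℝ, 0 < u → H₀ u θ = H₀ 1 θ := by
    intro u θ hu
    have hconv : Convex ℝ (Set.Ioi (0:ℝ)) := convex_Ioi 0
    have hdiff : DifferentiableOn ℝ (fun u' => H₀ u' θ) (Set.Ioi (0:ℝ)) := by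
      intro x hx
      exact (hdiffu x θ hx).differentiableWithinAt
    refine hconv.is_const_of_fderivWithin_eq_zero hdiff ?_ hu (by norm_num)
    intro x hx
    rw [fderivWithin_of_isOpen isOpen_Ioi hx]
    have hx' : (0:ℝ) < x := hx
    have hd : HasDerivAt (fun u' => H₀ u' θ) 0 x := by
      have := (hdiffu x θ hx').hasDerivAt
      rwa [hderu x θ hx'] at this
    have := hd.hasFDerivAt.fderiv
    rw [this]
    ext
    simp
  set h : ℝ → ℝ := fun θ => H₀ 1 θ with hh
  have hhdiff : Differentiable ℝ h := fun θ => hdiffθ 1 θ one_pos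
  have hderθ : ∀ u θ : ℝ, 0 < u → deriv (fun θ' => H₀ u θ') θ = deriv h θ := by
    intro u θ hu
    have : (fun θ' => H₀ u θ') = h := funext fun θ' => hconst u θ' hu
    rw [this]
  have hkey : ∀ u θ : ℝ, 0 < u → J u θ * deriv h θ = u := by
    intro u θ hu
    have := h1 u θ hu
    rwa [hderθ u θ hu] at this
  have hder_ne : ∀ θ : ℝ, deriv h θ ≠ 0 := by
    intro θ hzero
    have := hkey 1 θ one_pos
    rw [hzero, mul_zero] at this
    exact one_ne_zero this.symm
  refine ⟨h, hhdiff, fun u θ hu => hconst u θ hu, hder_ne, ?_⟩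
  intro u θ hu
  have := hkey u θ hu
  field_simp [hder_ne θ] at this ⊢
  linarith [this]
end

section
/- Let 𝔸 be a normed associative unital ℝ-algebra (e.g. a Banach algebra), and let p, q : ℝ → 𝔸 be differentiable functions satisfying the quantum Painlevé I flow p′(t) = 6·q(t)² + t·1 and q′(t) = p(t) for all t. For z ∈ ℝ define the Lax matrices A(z,t) = (−p(t))•H + (q(t)² + z·q(t) + (z² + t/2)·1)•X + (4z·1 − 4·q(t))•Y and B(z,t) = (q(t) + (z/2)·1)•X + 2•Y in Mat₂(𝔸). Then the quantum zero-curvature condition ∂ₜA(z,t) − ∂_zB(z,t) + (A(z,t)·B(z,t) − B(z,t)·A(z,t)) = 0 holds for all (z,t) ∈ ℝ², with no commutation relation between p and q required. -/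
/-- The standard sl₂ basis matrix `H`. -/
def matH (A : Type*) [Ring A] : Matrix (Fin 2) (Fin 2) A := !![1, 0; 0, -1]
/-- The standard sl₂ basis matrix `X`. -/
def matX (A : Type*) [Ring A] : Matrix (Fin 2) (Fin 2) A := !![0, 1; 0, 0]
/-- The standard sl₂ basis matrix `Y`. -/
def matY (A : Type*) [Ring A] : Matrix (Fin 2) (Fin 2) A := !![0, 0; 1, 0]

/-- Quantum flatness of the Painlevé I Lax pair: for operator-valued `p, q` satisfying
the quantum Painlevé I flow `p′ = 6q² + t·1`, `q′ = p` in a normed associative unital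
ℝ-algebra, the Lax pair `A = −p•H + (q² + zq + (z² + t/2)·1)•X + (4z·1 − 4q)•Y`,
`B = (q + (z/2)·1)•X + 2•Y` satisfies `∂ₜA − ∂_zB + [A,B] = 0`, with no commutation
relation between `p` and `q` required. -/
theorem quantum_painleveI_flat
    (𝔸 : Type*) [NormedRing 𝔸] [NormedAlgebra ℝ 𝔸]
    (p q : ℝ → 𝔸)
    (hp : ∀ t : ℝ, HasDerivAt p ((6 : ℝ) • (q t * q t) + t • (1 : 𝔸)) t)
    (hq : ∀ t : ℝ, HasDerivAt q (p t) t) :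
    let A : ℝ → ℝ → Matrix (Fin 2) (Fin 2) 𝔸 := fun z t =>
      (-(p t)) • matH 𝔸
        + (q t * q t + z • q t + (z ^ 2 + t / 2) • (1 : 𝔸)) • matX 𝔸
        + ((4 * z) • (1 : 𝔸) - (4 : ℝ) • q t) • matY 𝔸
    let B : ℝ → ℝ → Matrix (Fin 2) (Fin 2) 𝔸 := fun z t =>
      (q t + (z / 2) • (1 : 𝔸)) • matX 𝔸 + (2 : 𝔸) • matY 𝔸
    ∀ (z t : ℝ) (i j : Fin 2),
      deriv (fun s => A z s i j) t - deriv (fun w => B w t i j) z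
        + (A z t * B z t - B z t * A z t) i j = 0 := by
  intro A B z t i j
  have h2 : (2 : 𝔸) = (2 : ℝ) • (1 : 𝔸) := by
    simp [Algebra.smul_def, map_ofNat]
  have hpneg : HasDerivAt (fun s => -p s) (-((6 : ℝ) • (q t * q t) + t • (1 : 𝔸))) t := (hp t).neg
  have hA01 : HasDerivAt (fun s => q s * q s + z • q s + (z ^ 2 + s / 2) • (1 : 𝔸))
      (p t * q t + q t * p t + z • p t + ((1:ℝ)/2) • (1 : 𝔸)) t :=
    (((hq t).mul (hq t)).add ((hq t).const_smul z)).add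
      ((((hasDerivAt_id t).div_const 2).const_add (z^2)).smul_const (1 : 𝔸))
  have hB01 : HasDerivAt (fun w : ℝ => q t + (w / 2) • (1 : 𝔸)) (((1:ℝ)/2) • (1 : 𝔸)) z :=
    (((hasDerivAt_id z).div_const 2).smul_const (1 : 𝔸)).const_add (q t)
  have hA10 : HasDerivAt (fun s => (4 * z) • (1 : 𝔸) - (4 : ℝ) • q s) (-((4:ℝ) • p t)) t := by
    simpa using (((hq t).const_smul (4:ℝ)).const_sub ((4*z) • (1:𝔸)))
  fin_cases i <;> fin_cases j <;>
    simp only [A, B, matH, matX, matY, Matrix.smul_apply, Matrix.add_apply, Matrix.sub_apply,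
      Matrix.mul_apply, Fin.sum_univ_two, Matrix.cons_val', Matrix.cons_val_zero,
      Matrix.cons_val_one, Matrix.head_cons, Matrix.head_fin_const, Matrix.empty_val',
      Matrix.cons_val_fin_one, smul_eq_mul, mul_one, mul_zero, zero_mul, add_zero, zero_add,
      smul_zero, mul_neg, neg_zero, sub_zero, zero_sub, Fin.mk_zero, Fin.mk_one,
      Matrix.of_apply, one_mul, Fin.isValue]
  · rw [hpneg.deriv, deriv_const, h2]
    simp only [mul_add, add_mul, mul_sub, sub_mul, smul_mul_assoc, mul_smul_comm, smul_smul,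
      mul_one, one_mul, neg_mul, mul_neg, smul_neg, neg_add]
    module
  · rw [hA01.deriv, hB01.deriv]
    simp only [mul_add, add_mul, mul_sub, sub_mul, smul_mul_assoc, mul_smul_comm, smul_smul,
      mul_one, one_mul, neg_mul, mul_neg, smul_neg, neg_neg, neg_add]
    module
  · rw [hA10.deriv, deriv_const, h2]
    simp only [mul_add, add_mul, mul_sub, sub_mul, smul_mul_assoc, mul_smul_comm, smul_smul,
      mul_one, one_mul, neg_mul, mul_neg, smul_neg, neg_neg, neg_add]
    module
  · rw [(show HasDerivAt (fun s => - -p s) _ t from hpneg.neg).deriv, deriv_const, h2]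
    simp only [mul_add, add_mul, mul_sub, sub_mul, smul_mul_assoc, mul_smul_comm, smul_smul,
      mul_one, one_mul, neg_mul, mul_neg, smul_neg, neg_neg, neg_add]
    module
end

section
/- Let 𝔸 be a normed associative unital ℝ-algebra, let κ ∈ ℝ, let θ ∈ 𝔸 be fixed, and let p, q, u : ℝ → 𝔸 be differentiable with u(t) invertible for every t. Assume for all t: p(t)q(t) − q(t)p(t) = κ·1; u(t) commutes with p(t) and with q(t); θ commutes with p(t) and with q(t); θ·u(t) − u(t)·θ = −κ·u(t); and the quantum Painlevé II flow holds: p′ = −pq − qp − θ, q′ = p + q² + (t/2)·1, u′ = −q·u. Define A(z,t) = (z² + p + t/2)•H + (u(z − q))•X + (−2u⁻¹(pz + θ + pq))•Y and B(z,t) = (z/2)•H + (u/2)•X + (−p·u⁻¹)•Y in Mat₂(𝔸). Then the quantum zero-curvature condition ∂ₜA(z,t) − ∂_zB(z,t) + (A·B − B·A)(z,t) = 0 holds for all (z,t) ∈ ℝ², including the identity component. -/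
open Filter Topology

section AuxQPII

lemma qpii_comm_ext {R : Type*} [Ring R] {a b : R} (h : a * b = b * a) (x : R) :
    a * (b * x) = b * (a * x) := by rw [← mul_assoc, h, mul_assoc]

lemma qpii_inv_ext {R : Type*} [Ring R] {a b : R} (h : a * b = 1) (x : R) :
    a * (b * x) = x := by rw [← mul_assoc, h, one_mul]

lemma qpii_swap_ext {R : Type*} [Ring R] [Algebra ℝ R] {κ : ℝ} {a b c : R}
    (h : a * b = b * a - κ • c) (x : R) :
    a * (b * x) = b * (a * x) - κ • (c * x) := by
  rw [← mul_assoc, h, sub_mul, smul_mul_assoc, mul_assoc]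

lemma qpii_swap_ext2 {R : Type*} [Ring R] [Algebra ℝ R] {κ : ℝ} {a b c : R}
    (h : a * b = b * a + κ • c) (x : R) :
    a * (b * x) = b * (a * x) + κ • (c * x) := by
  rw [← mul_assoc, h, add_mul, smul_mul_assoc, mul_assoc]

lemma qpii_sandwich {R : Type*} [Ring R] {u v x y : R} (huv : u * v = 1) (hvu : v * u = 1)
    (h : u * x = y * u) : v * y = x * v := by
  have h1 : v * (u * x) * v = v * (y * u) * v := by rw [h]
  rw [← mul_assoc, hvu, one_mul] at h1
  rw [mul_assoc, mul_assoc, huv, mul_one] at h1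
  exact h1.symm

lemma qpii_sandwich2 {R : Type*} [Ring R] [Algebra ℝ R] {κ : ℝ} {u v a : R}
    (huv : u * v = 1) (hvu : v * u = 1)
    (h : a * u = u * a - κ • u) : v * a = a * v - κ • v := by
  have h1 : v * (a * u) * v = v * (u * a - κ • u) * v := by rw [h]
  have L : v * (a * u) * v = v * a := by
    rw [mul_assoc, mul_assoc, huv, mul_one]
  have R : v * (u * a - κ • u) * v = a * v - κ • v := by
    rw [mul_sub, sub_mul]
    congr 1
    · rw [← mul_assoc, hvu, one_mul]
    · rw [mul_smul_comm, smul_mul_assoc, hvu, one_mul]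
  rw [L, R] at h1
  exact h1

lemma qpii_hasDerivAt_inv {𝔸 : Type*} [NormedRing 𝔸] [NormedAlgebra ℝ 𝔸] {u v : ℝ → 𝔸}
    (hinv : ∀ t, u t * v t = 1 ∧ v t * u t = 1) {u' : 𝔸} {t : ℝ}
    (hu : HasDerivAt u u' t) :
    HasDerivAt v (-(v t * u' * v t)) t := by
  have key : ∀ s, v s - v t = -(v t * (u s - u t) * v s) := by
    intro s
    have h1 : v t * u t * v s = v s := by rw [(hinv t).2, one_mul]
    have h2 : v t * u s * v s = v t := by rw [mul_assoc, (hinv s).1, mul_one]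
    calc v s - v t = v t * u t * v s - v t * u s * v s := by rw [h1, h2]
    _ = -(v t * (u s - u t) * v s) := by noncomm_ring
  set C := ‖v t‖ with hC
  have hC0 : 0 ≤ C := norm_nonneg _
  have hU : Tendsto (fun s => ‖u s - u t‖) (𝓝 t) (𝓝 0) := by
    have := hu.continuousAt.tendsto
    have h0 : Tendsto (fun s => u s - u t) (𝓝 t) (𝓝 0) := by
      simpa using this.sub (tendsto_const_nhds (x := u t))
    simpa using h0.norm
  have hev : ∀ᶠ s in 𝓝 t, ‖u s - u t‖ ≤ 1 / (2 * (C + 1)) := by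
    have hpos : (0:ℝ) < 1 / (2 * (C + 1)) := by positivity
    filter_upwards [hU.eventually (eventually_le_nhds hpos)] with s hs using hs
  have hbound : ∀ᶠ s in 𝓝 t, ‖v s - v t‖ ≤ 2 * C ^ 2 * ‖u s - u t‖ := by
    filter_upwards [hev] with s hs
    have h1 : ‖v s - v t‖ ≤ C * ‖u s - u t‖ * ‖v s‖ := by
      rw [key s, norm_neg]
      calc ‖v t * (u s - u t) * v s‖ ≤ ‖v t * (u s - u t)‖ * ‖v s‖ := norm_mul_le _ _
      _ ≤ C * ‖u s - u t‖ * ‖v s‖ := by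
          gcongr; exact norm_mul_le _ _
    have h2 : ‖v s‖ ≤ C + ‖v s - v t‖ := by
      have := norm_sub_norm_le (v s) (v t)
      linarith
    have hCe : C * ‖u s - u t‖ ≤ 1 / 2 := by
      have h4 : C * ‖u s - u t‖ ≤ C * (1 / (2 * (C + 1))) := by gcongr
      have h3 : C * (1 / (2 * (C + 1))) ≤ 1 / 2 := by
        rw [mul_one_div, div_le_div_iff₀ (by positivity) (by norm_num : (0:ℝ) < 2)]
        linarith
      linarith
    nlinarith [norm_nonneg (u s - u t), norm_nonneg (v s - v t),
      mul_le_mul_of_nonneg_left h2 (mul_nonneg hC0 (norm_nonneg (u s - u t))),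
      mul_le_mul_of_nonneg_right hCe (norm_nonneg (v s - v t))]
  have hcv : Tendsto v (𝓝 t) (𝓝 (v t)) := by
    have hg : Tendsto (fun s => 2 * C ^ 2 * ‖u s - u t‖) (𝓝 t) (𝓝 0) := by
      simpa using hU.const_mul (2 * C ^ 2)
    have h0 : Tendsto (fun s => v s - v t) (𝓝 t) (𝓝 0) :=
      squeeze_zero_norm' hbound hg
    have := h0.add (tendsto_const_nhds (x := v t))
    simpa using this
  rw [hasDerivAt_iff_tendsto_slope]
  have hslope : ∀ s : ℝ, slope v t s = -(v t * slope u t s * v s) := by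
    intro s
    rw [slope_def_module, slope_def_module, key s]
    rw [mul_smul_comm, smul_mul_assoc, smul_neg]
  have := ((((hasDerivAt_iff_tendsto_slope.mp hu).const_mul (v t)).mul
      (hcv.mono_left nhdsWithin_le_nhds)).neg)
  exact this.congr fun s => (hslope s).symm

end AuxQPII

lemma qpii_entry_deriv {𝔸 : Type*} [NormedRing 𝔸] [NormedAlgebra ℝ 𝔸]
    {a b c : ℝ → 𝔸} {a' b' c' : 𝔸} {t : ℝ} (i j : Fin 2)
    (ha : HasDerivAt a a' t) (hb : HasDerivAt b b' t) (hc : HasDerivAt c c' t) :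
    HasDerivAt (fun s => (a s • matH 𝔸 + b s • matX 𝔸 + c s • matY 𝔸) i j)
      ((a' • matH 𝔸 + b' • matX 𝔸 + c' • matY 𝔸) i j) t := by
  simp only [Matrix.add_apply, Matrix.smul_apply, smul_eq_mul]
  exact ((ha.mul_const _).add (hb.mul_const _)).add (hc.mul_const _)

set_option maxHeartbeats 2000000

/-- Quantum flatness of the Painlevé II_JM Lax pair: with the Weyl relation
`[p,q] = κ`, the deformation quantization `[θ,u] = −κu`, `u` invertible (with
pointwise inverse `v`) commuting with `p, q`, `θ` commuting with `p, q`, and the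
quantum Painlevé II flow `p′ = −pq − qp − θ`, `q′ = p + q² + t/2`, `u′ = −qu`,
the Lax pair `A, B` satisfies the quantum zero-curvature condition
`∂ₜA − ∂_zB + [A,B] = 0`, including the identity component. -/
theorem quantum_painleveII_flat
    (𝔸 : Type*) [NormedRing 𝔸] [NormedAlgebra ℝ 𝔸]
    (κ : ℝ) (θ : 𝔸) (p q u v : ℝ → 𝔸)
    (hinv : ∀ t : ℝ, u t * v t = 1 ∧ v t * u t = 1)
    (hWeyl : ∀ t : ℝ, p t * q t - q t * p t = κ • (1 : 𝔸))
    (hup : ∀ t : ℝ, u t * p t = p t * u t) (huq : ∀ t : ℝ, u t * q t = q t * u t)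
    (hθp : ∀ t : ℝ, θ * p t = p t * θ) (hθq : ∀ t : ℝ, θ * q t = q t * θ)
    (hθu : ∀ t : ℝ, θ * u t - u t * θ = -(κ • u t))
    (hp' : ∀ t : ℝ, HasDerivAt p (-(p t * q t) - q t * p t - θ) t)
    (hq' : ∀ t : ℝ, HasDerivAt q (p t + q t * q t + (t / 2) • (1 : 𝔸)) t)
    (hu' : ∀ t : ℝ, HasDerivAt u (-(q t * u t)) t) :
    let A : ℝ → ℝ → Matrix (Fin 2) (Fin 2) 𝔸 := fun z t =>
      ((z ^ 2 + t / 2) • (1 : 𝔸) + p t) • matH 𝔸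
        + (u t * (z • (1 : 𝔸) - q t)) • matX 𝔸
        + (-((2 : 𝔸) * (v t * (z • p t + θ + p t * q t)))) • matY 𝔸
    let B : ℝ → ℝ → Matrix (Fin 2) (Fin 2) 𝔸 := fun z t =>
      ((z / 2) • (1 : 𝔸)) • matH 𝔸 + (((1 : ℝ)/2) • u t) • matX 𝔸
        + (-(p t * v t)) • matY 𝔸
    ∃ At Bz : ℝ → ℝ → Matrix (Fin 2) (Fin 2) 𝔸,
      (∀ (z t : ℝ) (i j : Fin 2), HasDerivAt (fun s => A z s i j) (At z t i j) t) ∧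
      (∀ (z t : ℝ) (i j : Fin 2), HasDerivAt (fun w => B w t i j) (Bz z t i j) z) ∧
      (∀ z t : ℝ, At z t - Bz z t + (A z t * B z t - B z t * A z t) = 0) := by
  intro A B
  refine ⟨fun z t =>
      ((1 / 2 : ℝ) • (1 : 𝔸) + (-(p t * q t) - q t * p t - θ)) • matH 𝔸
      + (-(q t * u t) * (z • (1 : 𝔸) - q t) + u t * -(p t + q t * q t + (t / 2) • (1 : 𝔸))) • matX 𝔸
      + (-((2 : 𝔸) * (-(v t * -(q t * u t) * v t) * (z • p t + θ + p t * q t)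
          + v t * (z • (-(p t * q t) - q t * p t - θ)
            + ((-(p t * q t) - q t * p t - θ) * q t
              + p t * (p t + q t * q t + (t / 2) • (1 : 𝔸))))))) • matY 𝔸,
    fun _ t => ((1 / 2 : ℝ) • (1 : 𝔸)) • matH 𝔸 + (0 : 𝔸) • matX 𝔸 + (0 : 𝔸) • matY 𝔸,
    ?_, ?_, ?_⟩
  · intro z t i j
    have ha : HasDerivAt (fun s : ℝ => (z ^ 2 + s / 2) • (1 : 𝔸) + p s)
        ((1 / 2 : ℝ) • (1 : 𝔸) + (-(p t * q t) - q t * p t - θ)) t :=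
      ((((hasDerivAt_id t).div_const 2).const_add (z ^ 2)).smul_const (1 : 𝔸)).add (hp' t)
    have hb : HasDerivAt (fun s : ℝ => u s * (z • (1 : 𝔸) - q s))
        (-(q t * u t) * (z • (1 : 𝔸) - q t) + u t * -(p t + q t * q t + (t / 2) • (1 : 𝔸))) t :=
      (hu' t).mul ((hq' t).const_sub (z • (1 : 𝔸)))
    have hv' : HasDerivAt v (-(v t * -(q t * u t) * v t)) t :=
      qpii_hasDerivAt_inv hinv (hu' t)
    have hw : HasDerivAt (fun s : ℝ => z • p s + θ + p s * q s)
        (z • (-(p t * q t) - q t * p t - θ)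
          + ((-(p t * q t) - q t * p t - θ) * q t
            + p t * (p t + q t * q t + (t / 2) • (1 : 𝔸)))) t :=
      (((hp' t).const_smul z).add_const θ).add ((hp' t).mul (hq' t))
    have hc : HasDerivAt (fun s : ℝ => -((2 : 𝔸) * (v s * (z • p s + θ + p s * q s))))
        (-((2 : 𝔸) * (-(v t * -(q t * u t) * v t) * (z • p t + θ + p t * q t)
          + v t * (z • (-(p t * q t) - q t * p t - θ)
            + ((-(p t * q t) - q t * p t - θ) * q t
              + p t * (p t + q t * q t + (t / 2) • (1 : 𝔸))))))) t :=
      ((hv'.mul hw).const_mul (2 : 𝔸)).neg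
    exact qpii_entry_deriv i j ha hb hc
  · intro z t i j
    have ha : HasDerivAt (fun w : ℝ => (w / 2) • (1 : 𝔸)) ((1 / 2 : ℝ) • (1 : 𝔸)) z :=
      ((hasDerivAt_id z).div_const 2).smul_const (1 : 𝔸)
    exact qpii_entry_deriv i j ha (hasDerivAt_const z _) (hasDerivAt_const z _)
  · intro z t
    have huv := (hinv t).1
    have hvu := (hinv t).2
    have hqp : q t * p t = p t * q t - κ • (1 : 𝔸) := by rw [← hWeyl t]; abel
    have hθu' : θ * u t = u t * θ - κ • u t := by
      have h := hθu t
      have h2 : θ * u t = (θ * u t - u t * θ) + u t * θ := by abel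
      rw [h2, h]; abel
    have hvp : v t * p t = p t * v t := qpii_sandwich huv hvu (hup t)
    have hvq : v t * q t = q t * v t := qpii_sandwich huv hvu (huq t)
    have hvθ : v t * θ = θ * v t - κ • v t := qpii_sandwich2 huv hvu hθu'
    have huθ : u t * θ = θ * u t + κ • u t := by rw [hθu']; abel
    ext i j
    fin_cases i <;> fin_cases j <;>
      simp [A, B, matH, matX, matY, Matrix.add_apply, Matrix.sub_apply,
        Matrix.smul_apply, Matrix.mul_apply, Fin.sum_univ_two, smul_eq_mul,
        Matrix.zero_apply, Matrix.cons_val', Matrix.cons_val_zero, Matrix.cons_val_one,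
        Matrix.head_cons, Matrix.head_fin_const, Matrix.empty_val',
        Matrix.cons_val_fin_one, Fin.isValue, Fin.mk_zero, Fin.mk_one] <;>
      simp only [mul_add, add_mul, mul_sub, sub_mul, mul_assoc, smul_mul_assoc,
        mul_smul_comm, smul_smul, mul_one, one_mul, mul_zero, zero_mul, neg_mul,
        mul_neg, neg_neg, two_mul, smul_neg, neg_zero, add_zero, zero_add,
        hqp, qpii_swap_ext hqp, huθ, qpii_swap_ext2 huθ, hvθ, qpii_swap_ext hvθ,
        hup t, qpii_comm_ext (hup t), huq t, qpii_comm_ext (huq t),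
        hθp t, qpii_comm_ext (hθp t), hθq t, qpii_comm_ext (hθq t),
        hvp, qpii_comm_ext hvp, hvq, qpii_comm_ext hvq,
        huv, qpii_inv_ext huv, hvu, qpii_inv_ext hvu] <;>
      module
end

section
/- Let 𝔸 be a normed associative unital ℝ-algebra, and let p, E₊, E₋ : ℝ → 𝔸 be differentiable functions such that E₊(t)·E₋(t) = E₋(t)·E₊(t) for all t, and satisfying the quantum Toda flow: p′ = −E₊² + E₋², E₊′ = (1/2)(p·E₊ + E₊·p), and E₋′ = −(1/2)(p·E₋ + E₋·p). For a real parameter z ≠ 0 define the Lax matrices L(z,t) = !![p, E₊ + z⁻¹E₋; E₊ + zE₋, −p] and M(z,t) = !![0, −(1/2)(E₊ − z⁻¹E₋); (1/2)(E₊ − zE₋), 0] in Mat₂(𝔸). Then the isospectral zero-curvature condition ∂ₜL − (ML − LM) = 0 holds for all z ≠ 0 and all t. -/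
/-- Quantum periodic Toda isospectrality: for operator-valued `p, E₊, E₋` in a normed
associative unital ℝ-algebra with `E₊E₋ = E₋E₊` and the exact quantum flows
`p′ = −E₊² + E₋²`, `E₊′ = (1/2)(pE₊ + E₊p)`, `E₋′ = −(1/2)(pE₋ + E₋p)`,
the Lax pair `L = !![p, E₊ + z⁻¹E₋; E₊ + zE₋, −p]`,
`M = !![0, −(1/2)(E₊ − z⁻¹E₋); (1/2)(E₊ − zE₋), 0]` satisfies the zero-curvature
condition `∂ₜL − (ML − LM) = 0` for all `z ≠ 0` and all `t`. -/
theorem quantum_toda_zero_curvature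
    (𝔸 : Type*) [NormedRing 𝔸] [NormedAlgebra ℝ 𝔸]
    (p Ep Em : ℝ → 𝔸)
    (hcomm : ∀ t : ℝ, Ep t * Em t = Em t * Ep t)
    (hp' : ∀ t : ℝ, HasDerivAt p (-(Ep t * Ep t) + Em t * Em t) t)
    (hEp' : ∀ t : ℝ, HasDerivAt Ep (((1 : ℝ)/2) • (p t * Ep t + Ep t * p t)) t)
    (hEm' : ∀ t : ℝ, HasDerivAt Em (-(((1 : ℝ)/2) • (p t * Em t + Em t * p t))) t) :
    let L : ℝ → ℝ → Matrix (Fin 2) (Fin 2) 𝔸 := fun z t =>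
      !![p t, Ep t + z⁻¹ • Em t; Ep t + z • Em t, -(p t)]
    let M : ℝ → ℝ → Matrix (Fin 2) (Fin 2) 𝔸 := fun z t =>
      !![0, -(((1 : ℝ)/2) • (Ep t - z⁻¹ • Em t)); ((1 : ℝ)/2) • (Ep t - z • Em t), 0]
    ∀ z : ℝ, z ≠ 0 → ∀ t : ℝ, ∀ i j : Fin 2,
      deriv (fun s => L z s i j) t - (M z t * L z t - L z t * M z t) i j = 0 := by
  intro L M z hz t i j
  have h00 : deriv (fun s => p s) t = -(Ep t * Ep t) + Em t * Em t := (hp' t).deriv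
  have h11 : deriv (fun s => -(p s)) t = -(-(Ep t * Ep t) + Em t * Em t) := ((hp' t).neg).deriv
  have h01 : deriv (fun s => Ep s + z⁻¹ • Em s) t
      = ((1 : ℝ)/2) • (p t * Ep t + Ep t * p t)
        + z⁻¹ • (-(((1 : ℝ)/2) • (p t * Em t + Em t * p t))) :=
    ((hEp' t).add ((hEm' t).const_smul z⁻¹)).deriv
  have h10 : deriv (fun s => Ep s + z • Em s) t
      = ((1 : ℝ)/2) • (p t * Ep t + Ep t * p t)
        + z • (-(((1 : ℝ)/2) • (p t * Em t + Em t * p t))) :=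
    ((hEp' t).add ((hEm' t).const_smul z)).deriv
  fin_cases i <;> fin_cases j <;>
    simp only [L, M, Matrix.mul_apply, Fin.sum_univ_two, Matrix.cons_val', Matrix.cons_val_zero,
      Matrix.cons_val_one, Matrix.head_cons, Matrix.empty_val', Matrix.cons_val_fin_one,
      Matrix.head_fin_const, Fin.isValue, Fin.mk_zero, Fin.mk_one, Matrix.sub_apply,
      Matrix.of_apply, h00, h11, h01, h10] <;>
    simp only [sub_mul, mul_sub, add_mul, mul_add, smul_mul_assoc, mul_smul_comm, neg_mul,
      mul_neg, smul_neg, neg_neg, zero_mul, mul_zero, smul_add, smul_sub, smul_smul, add_zero,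
      zero_add] <;>
    match_scalars <;> field_simp <;> ring
end
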